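/- arXiv:2009.12266 — 10 statements merged into one kernel-verified Lean document; each statement's English description precedes it below -/
import Mathlib

section
/- If (A, μ) is an associative algebra over a commutative ring k and α : A → A is an algebra homomorphism, then (A, μ_α, α) with μ_α(a,b) = α(μ(a,b)) is a multiplicative hom-associative algebra, i.e., (a ·_α b) ·_α α(c) = α(a) ·_α (b ·_α c) for all a, b, c ∈ A, and α(a ·_α b) = α(a) ·_α α(b). -/
/-- if `(A, μ)` is an associative algebra over a commutative ring `k` and
`α : A → A` is an algebra homomorphism, then `(A, μ_α, α)` with
`μ_α(a,b) = α(μ(a,b))` is a multiplicative hom-associative algebra: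
`(a ·_α b) ·_α α(c) = α(a) ·_α (b ·_α c)` and `α(a ·_α b) = α(a) ·_α α(b)`. -/
theorem yau_twist_is_multiplicative_hom_associative
    {k : Type*} [CommRing k] {A : Type*} [AddCommGroup A] [Module k A]
    (μ : A →ₗ[k] A →ₗ[k] A)
    (hassoc : ∀ a b c : A, μ (μ a b) c = μ a (μ b c))
    (α : A →ₗ[k] A)
    (hα : ∀ a b : A, α (μ a b) = μ (α a) (α b)) :
    (∀ a b c : A, α (μ (α (μ a b)) (α c)) = α (μ (α a) (α (μ b c)))) ∧
    (∀ a b : A, α (α (μ a b)) = α (μ (α a) (α b))) := by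
  constructor
  · intro a b c
    rw [← hα, hassoc, hα]
  · intro a b
    rw [hα]
end

section
/- Let (A, μ, α) be a regular hom-associative algebra (α invertible). Then (A, μ_{α⁻¹}) with μ_{α⁻¹}(a,b) = α⁻¹(a · b) is an associative algebra, and α is an algebra morphism for this product. -/
/-- if `(A, μ, α)` is a regular (multiplicative) hom-associative algebra
(`α` invertible), then `μ_{α⁻¹}(a,b) = α⁻¹(a · b)` is an associative product on `A`,
and `α` is an algebra morphism for this product. -/
theorem regular_hom_associative_untwists
    {k : Type*} [CommRing k] {A : Type*} [AddCommGroup A] [Module k A]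
    (μ : A →ₗ[k] A →ₗ[k] A) (α : A ≃ₗ[k] A)
    (hassoc : ∀ a b c : A, μ (μ a b) (α c) = μ (α a) (μ b c))
    (hmult : ∀ a b : A, α (μ a b) = μ (α a) (α b)) :
    (∀ a b c : A, α.symm (μ (α.symm (μ a b)) c) = α.symm (μ a (α.symm (μ b c)))) ∧
    (∀ a b : A, α (α.symm (μ a b)) = α.symm (μ (α a) (α b))) := by
  have hsymm : ∀ x y : A, α.symm (μ x y) = μ (α.symm x) (α.symm y) := by
    intro x y
    apply α.injective
    simp [hmult]
  constructor
  · intro a b c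
    congr 1
    rw [hsymm a b, hsymm b c]
    have := hassoc (α.symm a) (α.symm b) (α.symm c)
    simpa using this
  · intro a b
    rw [← hmult]
    simp
end

section
/- Let (A, μ, α) be a multiplicative hom-associative algebra and let O(p) = {f : A^⊗p → A | α ∘ f = f ∘ α^⊗p}. The partial compositions (f ∘_i g)(a_1,…,a_{p+q-1}) = f(α^{q-1}(a_1),…,α^{q-1}(a_{i-1}), g(a_i,…,a_{i+q-1}), α^{q-1}(a_{i+q}),…,α^{q-1}(a_{p+q-1})) satisfy the operad axiom (f ∘_i g) ∘_j h = f ∘_i (g ∘_{j-i+1} h) for i ≤ j < q + i, where f ∈ O(p), g ∈ O(q), h ∈ O(r). -/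
open Function

section
variable {k : Type*} [CommRing k] {A : Type*} [AddCommGroup A] [Module k A]

/-- Partial composition in the endomorphism-type operad of Hochschild cochains of a
hom-associative algebra: `(f ∘_i g)` for `f` of arity `p`, `g` of arity `q`,
in 1-indexed position `i`.  Tuples are encoded as sequences `ℕ → A`. -/
def oComp (α : A → A) (q i : ℕ) (f g : (ℕ → A) → A) : (ℕ → A) → A := fun a =>
  f fun j => if j + 1 < i then α^[q - 1] (a j)
    else if j + 1 = i then g (fun l => a (j + l))
    else α^[q - 1] (a (j + q - 1))

/-- The comp module action `f •_i x` of a `p`-cochain on a Hochschild chain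
`x = a_0 ⊗ a_1 ⋯ a_n` (encoded as a sequence `ℕ → A`). -/
def mBul (α : A → A) (p i : ℕ) (f : (ℕ → A) → A) (x : ℕ → A) : ℕ → A := fun j =>
  if j < i then α^[p - 1] (x j)
  else if j = i then f (fun l => x (i + l))
  else α^[p - 1] (x (j + p - 1))

/-- The cyclic operator `t(a_0 ⊗ a_1 ⋯ a_n) = a_n ⊗ a_0 a_1 ⋯ a_{n-1}` on `M(n)`. -/
def cyc (n : ℕ) (x : ℕ → A) : ℕ → A := fun j => if j = 0 then x n else x (j - 1)

/-- `f` is a Hochschild `p`-cochain of the hom-associative algebra `(A, μ, α)`: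
it depends only on the first `p` arguments, is `k`-multilinear in them, and
satisfies `α ∘ f = f ∘ α^{⊗p}`. -/
structure InO (k : Type*) [CommRing k] {A : Type*} [AddCommGroup A] [Module k A]
    (α : A → A) (p : ℕ) (f : (ℕ → A) → A) : Prop where
  dep : ∀ a b : ℕ → A, (∀ j < p, a j = b j) → f a = f b
  equivar : ∀ a : ℕ → A, α (f a) = f fun j => α (a j)
  map_add : ∀ (a : ℕ → A) (j : ℕ) (x y : A), j < p →
    f (Function.update a j (x + y)) = f (Function.update a j x) + f (Function.update a j y)
  map_smul : ∀ (a : ℕ → A) (j : ℕ) (c : k) (x : A), j < p →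
    f (Function.update a j (c • x)) = c • f (Function.update a j x)

/-- the partial compositions on Hochschild cochains of a multiplicative
hom-associative algebra satisfy the nested operad axiom
`(f ∘_i g) ∘_j h = f ∘_i (g ∘_{j-i+1} h)` for `i ≤ j < q + i`. -/
theorem operad_axiom_nested (μ : A →ₗ[k] A →ₗ[k] A) (α : A →ₗ[k] A)
    (hassoc : ∀ a b c : A, μ (μ a b) (α c) = μ (α a) (μ b c))
    (hmult : ∀ a b : A, α (μ a b) = μ (α a) (α b))
    (p q r i j : ℕ) (f g h : (ℕ → A) → A)
    (hf : InO k (⇑α) p f) (hg : InO k (⇑α) q g) (hh : InO k (⇑α) r h)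
    (hp : 1 ≤ p) (hq : 1 ≤ q) (hr : 1 ≤ r)
    (hi1 : 1 ≤ i) (hip : i ≤ p) (hij : i ≤ j) (hjq : j < q + i) :
    oComp (⇑α) r j (oComp (⇑α) q i f g) h
      = oComp (⇑α) (q + r - 1) i f (oComp (⇑α) r (j - i + 1) g h) := by
  funext a
  simp only [oComp]
  congr 1
  funext t
  by_cases h1 : t + 1 < i
  · have h2 : t + 1 < j := lt_of_lt_of_le h1 hij
    simp only [if_pos h1, if_pos h2, ← Function.iterate_add_apply]
    congr 2
    omega
  · by_cases h3 : t + 1 = i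
    · have h2 : ¬ t + 1 < j ∨ True := Or.inr trivial
      simp only [if_neg h1, if_pos h3]
      congr 1
      funext s
      by_cases c1 : s + 1 < j - i + 1
      · have : t + s + 1 < j := by omega
        simp only [if_pos c1, if_pos this]
      · by_cases c2 : s + 1 = j - i + 1
        · have : t + s + 1 = j := by omega
          have nlt : ¬ t + s + 1 < j := by omega
          simp only [if_neg c1, if_pos c2, if_neg nlt, if_pos this]
          congr 1
          funext m
          congr 1
          omega
        · have nlt : ¬ t + s + 1 < j := by omega
          have neq : t + s + 1 ≠ j := by omega
          simp only [if_neg c1, if_neg c2, if_neg nlt, if_neg neq]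
          have e : t + s + r - 1 = t + (s + r - 1) := by omega
          rw [e]
    · have nlt : ¬ t + q - 1 + 1 < j := by omega
      have neq : t + q - 1 + 1 ≠ j := by omega
      simp only [if_neg h1, if_neg h3, if_neg nlt, if_neg neq,
        ← Function.iterate_add_apply]
      congr 2
      · omega
      · omega


end
end

section
/- Let (A, μ, α) be a multiplicative hom-associative algebra with Hochschild cochain operad O as above. The partial compositions satisfy the disjointness operad axiom: (f ∘_i g) ∘_j h = (f ∘_j h) ∘_{i+r-1} g for j < i, where f ∈ O(p), g ∈ O(q), h ∈ O(r). -/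
open Function

section
variable {k : Type*} [CommRing k] {A : Type*} [AddCommGroup A] [Module k A]

private lemma iterEquivar {k : Type*} [CommRing k] {A : Type*} [AddCommGroup A] [Module k A]
    {α : A → A} {p : ℕ} {f : (ℕ → A) → A} (hf : InO k α p f) (n : ℕ) (a : ℕ → A) :
    α^[n] (f a) = f (fun j => α^[n] (a j)) := by
  induction n generalizing a with
  | zero => simp
  | succ n ih =>
    rw [Function.iterate_succ_apply', ih, hf.equivar]
    simp [Function.iterate_succ_apply']

private lemma iterComm {A : Type*} (α : A → A) (m n : ℕ) (x : A) :
    α^[m] (α^[n] x) = α^[n] (α^[m] x) := by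
  rw [← Function.iterate_add_apply, ← Function.iterate_add_apply, Nat.add_comm]

/-- the partial compositions on Hochschild cochains of a multiplicative
hom-associative algebra satisfy the disjointness operad axiom
`(f ∘_i g) ∘_j h = (f ∘_j h) ∘_{i+r-1} g` for `j < i`. -/
theorem operad_axiom_disjoint (μ : A →ₗ[k] A →ₗ[k] A) (α : A →ₗ[k] A)
    (hassoc : ∀ a b c : A, μ (μ a b) (α c) = μ (α a) (μ b c))
    (hmult : ∀ a b : A, α (μ a b) = μ (α a) (α b))
    (p q r i j : ℕ) (f g h : (ℕ → A) → A)
    (hf : InO k (⇑α) p f) (hg : InO k (⇑α) q g) (hh : InO k (⇑α) r h)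
    (hp : 1 ≤ p) (hq : 1 ≤ q) (hr : 1 ≤ r)
    (hj1 : 1 ≤ j) (hji : j < i) (hip : i ≤ p) :
    oComp (⇑α) r j (oComp (⇑α) q i f g) h
      = oComp (⇑α) q (i + r - 1) (oComp (⇑α) r j f h) g := by
  funext a
  simp only [oComp]
  congr 1
  funext m
  by_cases h1 : m + 1 < j
  · have h2 : m + 1 < i := h1.trans hji
    have h3 : m + 1 < i + r - 1 := by omega
    simp only [if_pos h1, if_pos h2, if_pos h3]
    exact iterComm _ _ _ _
  · by_cases h2 : m + 1 = j
    · have h3 : m + 1 < i := by omega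
      simp only [if_neg h1, if_pos h2, if_pos h3]
      rw [iterEquivar hh]
      exact hh.dep _ _ fun l hl => by rw [if_pos (by omega)]
    · by_cases h3 : m + 1 < i
      · have h4 : m + r - 1 + 1 < i + r - 1 := by omega
        simp only [if_neg h1, if_neg h2, if_pos h3, if_pos h4]
        exact iterComm _ _ _ _
      · by_cases h4 : m + 1 = i
        · have h5 : ¬ m + r - 1 + 1 < i + r - 1 := by omega
          have h6 : m + r - 1 + 1 = i + r - 1 := by omega
          simp only [if_neg h1, if_neg h2, if_neg h3, if_pos h4, if_neg h5, if_pos h6]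
          rw [iterEquivar hg]
          refine congrArg g (funext fun l => ?_)
          rw [if_neg (by omega), if_neg (by omega),
            show m + l + r - 1 = m + r - 1 + l from by omega]
        · have h5 : ¬ m + q - 1 + 1 < j := by omega
          have h6 : ¬ m + q - 1 + 1 = j := by omega
          have h7 : ¬ m + r - 1 + 1 < i + r - 1 := by omega
          have h8 : ¬ m + r - 1 + 1 = i + r - 1 := by omega
          simp only [if_neg h1, if_neg h2, if_neg h3, if_neg h4, if_neg h5, if_neg h6,
            if_neg h7, if_neg h8]
          rw [show m + q - 1 + r - 1 = m + r - 1 + q - 1 from by omega]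
          exact iterComm _ _ _ _

end
end

section
/- Let (A, μ, α) be a multiplicative hom-associative algebra. The element μ ∈ O(2) of the Hochschild cochain operad of A is a multiplication on the operad, i.e., μ ∘_1 μ = μ ∘_2 μ. -/
open Function

section
variable {k : Type*} [CommRing k] {A : Type*} [AddCommGroup A] [Module k A]

/-- the multiplication `μ` of a multiplicative hom-associative algebra,
viewed as an element of arity 2 of the Hochschild cochain operad, is an operadic
multiplication: `μ ∘_1 μ = μ ∘_2 μ`. -/
theorem mu_is_operad_multiplication (μ : A →ₗ[k] A →ₗ[k] A) (α : A →ₗ[k] A)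
    (hassoc : ∀ a b c : A, μ (μ a b) (α c) = μ (α a) (μ b c))
    (hmult : ∀ a b : A, α (μ a b) = μ (α a) (α b)) :
    oComp (⇑α) 2 1 (fun a : ℕ → A => μ (a 0) (a 1)) (fun a : ℕ → A => μ (a 0) (a 1))
      = oComp (⇑α) 2 2 (fun a : ℕ → A => μ (a 0) (a 1)) (fun a : ℕ → A => μ (a 0) (a 1)) := by
  funext a
  simp only [oComp]
  norm_num
  exact hassoc (a 0) (a 1) (a 2)

end
end

section
/- Let (A, μ, α) be a multiplicative hom-associative algebra, M(n) = A ⊗ A^⊗n, and for f ∈ O(p), 1 ≤ i ≤ n-p+1, define f •_i (a_0 ⊗ a_1 ⋯ a_n) = α^{p-1}(a_0) ⊗ α^{p-1}(a_1) ⋯ α^{p-1}(a_{i-1}) f(a_i,…,a_{i+p-1}) α^{p-1}(a_{i+p}) ⋯ α^{p-1}(a_n). Then for j < i and f ∈ O(p), g ∈ O(q): f •_i (g •_j x) = g •_j (f •_{i+q-1} x). -/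
open Function

section
variable {k : Type*} [CommRing k] {A : Type*} [AddCommGroup A] [Module k A]

private lemma iter_equivar {A : Type*} {α : A → A} {f : (ℕ → A) → A}
    (h : ∀ a : ℕ → A, α (f a) = f fun j => α (a j)) (m : ℕ) (a : ℕ → A) :
    α^[m] (f a) = f fun j => α^[m] (a j) := by
  induction m generalizing a with
  | zero => simp
  | succ n ih =>
    rw [Function.iterate_succ_apply', ih, h]
    congr 1
    funext j
    exact (Function.iterate_succ_apply' α n (a j)).symm

/-- first comp-module identity for the Hochschild chains of a
multiplicative hom-associative algebra:
`f •_i (g •_j x) = g •_j (f •_{i+q-1} x)` for `j < i`. -/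
theorem comp_module_disjoint (μ : A →ₗ[k] A →ₗ[k] A) (α : A →ₗ[k] A)
    (hassoc : ∀ a b c : A, μ (μ a b) (α c) = μ (α a) (μ b c))
    (hmult : ∀ a b : A, α (μ a b) = μ (α a) (α b))
    (p q i j n : ℕ) (f g : (ℕ → A) → A)
    (hf : InO k (⇑α) p f) (hg : InO k (⇑α) q g)
    (hp : 1 ≤ p) (hq : 1 ≤ q) (hpn : p ≤ n) (hqn : q ≤ n)
    (hj1 : 1 ≤ j) (hji : j < i) (hrange : i + p + q ≤ n + 2) (x : ℕ → A) :
    mBul (⇑α) p i f (mBul (⇑α) q j g x) = mBul (⇑α) q j g (mBul (⇑α) p (i + q - 1) f x) := by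
  have comm : ∀ y : A, (⇑α)^[p - 1] ((⇑α)^[q - 1] y) = (⇑α)^[q - 1] ((⇑α)^[p - 1] y) := by
    intro y
    rw [← Function.iterate_add_apply, ← Function.iterate_add_apply, Nat.add_comm]
  funext m
  simp only [mBul]
  rcases lt_trichotomy m j with hmj | rfl | hmj
  · have hmi : m < i := hmj.trans hji
    have hmi' : m < i + q - 1 := by omega
    simp only [hmj, hmi, hmi', if_true]
    exact comm _
  · simp only [hji, lt_self_iff_false, eq_self_iff_true, if_true, if_false]
    rw [iter_equivar hg.equivar]
    refine hg.dep _ _ fun l hl => ?_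
    rw [if_pos (show m + l < i + q - 1 by omega)]
  · have h1 : ¬ m < j := by omega
    have h2 : m ≠ j := by omega
    rcases lt_trichotomy m i with hmi | rfl | hmi
    · have h3 : m + q - 1 < i + q - 1 := by omega
      simp only [hmi, h1, h2, h3, if_true, if_false]
      exact comm _
    · simp only [h1, h2, lt_self_iff_false, eq_self_iff_true, if_true, if_false]
      rw [iter_equivar hf.equivar]
      refine hf.dep _ _ fun l hl => ?_
      rw [if_neg (by omega : ¬ m + l < j), if_neg (by omega : ¬ m + l = j),
        show m + l + q - 1 = m + q - 1 + l by omega]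
    · have h4 : ¬ m + p - 1 < j := by omega
      have h5 : m + p - 1 ≠ j := by omega
      have h6 : ¬ m < i := by omega
      have h7 : m ≠ i := by omega
      have h8 : ¬ m + q - 1 < i + q - 1 := by omega
      have h9 : m + q - 1 ≠ i + q - 1 := by omega
      simp only [h1, h2, h4, h5, h6, h7, h8, h9, if_false]
      rw [show m + p - 1 + q - 1 = m + q - 1 + p - 1 by omega]
      exact comm _

end
end

section
/- With A, O, M, •_i as above: for j - p ≤ i ≤ j, f ∈ O(p), g ∈ O(q), x ∈ M(n): f •_i (g •_j x) = (f ∘_{j-i+1} g) •_i x. -/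
open Function

section
variable {k : Type*} [CommRing k] {A : Type*} [AddCommGroup A] [Module k A]

/-- second comp-module identity for the Hochschild chains of a
multiplicative hom-associative algebra:
`f •_i (g •_j x) = (f ∘_{j-i+1} g) •_i x` for `j - p ≤ i ≤ j`
(i.e. `i ≤ j < i + p`, the range where `∘_{j-i+1}` is defined). -/
theorem comp_module_nested (μ : A →ₗ[k] A →ₗ[k] A) (α : A →ₗ[k] A)
    (hassoc : ∀ a b c : A, μ (μ a b) (α c) = μ (α a) (μ b c))
    (hmult : ∀ a b : A, α (μ a b) = μ (α a) (α b))
    (p q i j n : ℕ) (f g : (ℕ → A) → A)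
    (hf : InO k (⇑α) p f) (hg : InO k (⇑α) q g)
    (hp : 1 ≤ p) (hq : 1 ≤ q)
    (hi1 : 1 ≤ i) (hij : i ≤ j) (hjp : j < i + p)
    (hrange : i + p + q ≤ n + 2) (hjq : j + q ≤ n + 1) (x : ℕ → A) :
    mBul (⇑α) p i f (mBul (⇑α) q j g x)
      = mBul (⇑α) (p + q - 1) i (oComp (⇑α) q (j - i + 1) f g) x := by
  funext m
  simp only [mBul, oComp]
  rcases lt_trichotomy m i with h1 | h1 | h1
  · have hmj : m < j := lt_of_lt_of_le h1 hij
    rw [if_pos h1, if_pos h1, if_pos hmj, ← Function.iterate_add_apply]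
    congr 1
    omega
  · subst h1
    rw [if_neg (lt_irrefl m), if_neg (lt_irrefl m), if_pos rfl, if_pos rfl]
    congr 1
    funext l
    rcases lt_trichotomy (m + l) j with h2 | h2 | h2
    · rw [if_pos h2, if_pos (by omega : l + 1 < j - m + 1)]
    · rw [if_neg (by omega), if_pos h2, if_neg (by omega), if_pos (by omega : l + 1 = j - m + 1)]
      congr 1
      funext l'
      congr 1
      omega
    · rw [if_neg (by omega), if_neg (by omega), if_neg (by omega), if_neg (by omega)]
      congr 2
      omega
  · rw [if_neg (by omega), if_neg (by omega), if_neg (by omega), if_neg (by omega),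
      if_neg (by omega), if_neg (by omega), ← Function.iterate_add_apply,
      (by omega : p - 1 + (q - 1) = p + q - 1 - 1),
      (by omega : m + p - 1 + q - 1 = m + (p + q - 1) - 1)]

end
end

section
/- Let (A, μ, α) be a multiplicative hom-associative algebra. Define f •_0 (a_0 ⊗ a_1 ⋯ a_n) = f(a_0,…,a_{p-1}) ⊗ α^{p-1}(a_p) ⋯ α^{p-1}(a_n) and the cyclic operator t(a_0 ⊗ a_1 ⋯ a_n) = a_n ⊗ a_0 a_1 ⋯ a_{n-1}. Then t^{n+1} = id on M(n), and t(f •_i x) = f •_{i+1} t(x) for all f ∈ O(p), x ∈ M(n), 0 ≤ i ≤ n - p. -/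
open Function

section
variable {k : Type*} [CommRing k] {A : Type*} [AddCommGroup A] [Module k A]

/-- the cyclic operator `t` on Hochschild chains of a multiplicative
hom-associative algebra satisfies `t^{n+1} = id` on `M(n)` and
`t (f •_i x) = f •_{i+1} t(x)` for `0 ≤ i ≤ n - p` (equalities of elementary
tensors, i.e. coordinatewise in the relevant range). -/
theorem cyclic_comp_module (μ : A →ₗ[k] A →ₗ[k] A) (α : A →ₗ[k] A)
    (hassoc : ∀ a b c : A, μ (μ a b) (α c) = μ (α a) (μ b c))
    (hmult : ∀ a b : A, α (μ a b) = μ (α a) (α b))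
    (p n i : ℕ) (f : (ℕ → A) → A) (hf : InO k (⇑α) p f)
    (hp : 1 ≤ p) (hpn : p ≤ n) (hi : i ≤ n - p) :
    (∀ (x : ℕ → A) (j : ℕ), j ≤ n → (cyc (A := A) n)^[n + 1] x j = x j) ∧
    (∀ (x : ℕ → A) (j : ℕ), j ≤ n - p + 1 →
      cyc (n - p + 1) (mBul (⇑α) p i f x) j = mBul (⇑α) p (i + 1) f (cyc n x) j) := by
  constructor
  · have key : ∀ m, m ≤ n + 1 → ∀ x : ℕ → A, ∀ j, j ≤ n →
        (cyc (A := A) n)^[m] x j = if j < m then x (n + 1 + j - m) else x (j - m) := by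
      intro m
      induction m with
      | zero => intro _ x j hj; simp
      | succ m ih =>
        intro hm x j hj
        rw [Function.iterate_succ_apply, ih (by omega) (cyc n x) j hj]
        unfold cyc
        by_cases h1 : j < m
        · rw [if_pos h1, if_pos (show j < m + 1 by omega),
            if_neg (show ¬ (n + 1 + j - m = 0) by omega),
            show n + 1 + j - m - 1 = n + 1 + j - (m + 1) by omega]
        · by_cases h2 : j = m
          · subst h2
            rw [if_neg h1, if_pos (show j - j = 0 by omega),
              if_pos (show j < j + 1 by omega),
              show n + 1 + j - (j + 1) = n by omega]
          · rw [if_neg h1, if_neg (show ¬ j < m + 1 by omega),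
              if_neg (show ¬ (j - m = 0) by omega),
              show j - m - 1 = j - (m + 1) by omega]
    intro x j hj
    rw [key (n + 1) le_rfl x j hj, if_pos (by omega),
      show n + 1 + j - (n + 1) = j by omega]
  · intro x j hj
    unfold cyc mBul
    beta_reduce
    by_cases h0 : j = 0
    · rw [if_pos h0, if_pos (show j < i + 1 by omega),
        if_neg (show ¬ (n - p + 1 < i) by omega),
        if_neg (show ¬ (n - p + 1 = i) by omega),
        show n - p + 1 + p - 1 = n by omega, if_pos h0]
    · rw [if_neg h0]
      by_cases h1 : j < i + 1
      · rw [if_pos h1, if_pos (show j - 1 < i by omega), if_neg h0]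
      · by_cases h2 : j = i + 1
        · rw [if_neg h1, if_pos h2, if_neg (show ¬ (j - 1 < i) by omega),
            if_pos (show j - 1 = i by omega)]
          congr 1
          funext l
          rw [if_neg (show ¬ (i + 1 + l = 0) by omega),
            show i + 1 + l - 1 = i + l by omega]
        · rw [if_neg h1, if_neg h2, if_neg (show ¬ (j - 1 < i) by omega),
            if_neg (show ¬ (j - 1 = i) by omega),
            if_neg (show ¬ (j + p - 1 = 0) by omega),
            show j + p - 1 - 1 = j - 1 + p - 1 by omega]

end
end

section
/- Let (A, μ, α) be a multiplicative hom-associative algebra. The Hochschild coboundary δ_α : C^n_α(A,M) → C^{n+1}_α(A,M) defined on cochains with coefficients in a bimodule (M, β) satisfies δ_α² = 0. -/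
open Function

section
variable {k : Type*} [CommRing k] {A : Type*} [AddCommGroup A] [Module k A]
  {M : Type*} [AddCommGroup M] [Module k M]

/-- The Hochschild coboundary `δ_α` of a hom-associative algebra `(A, μ, α)` with
coefficients in a bimodule `M` with actions `l`, `r`, applied to an `n`-cochain
(cochains are encoded as functions on sequences `ℕ → A` depending on the first `n`
entries). -/
def hdelta (μ : A → A → A) (α : A → A) (l : A → M → M) (r : M → A → M)
    (n : ℕ) (f : (ℕ → A) → M) : (ℕ → A) → M := fun a =>
  l (α^[n - 1] (a 0)) (f fun j => a (j + 1))
    + ∑ i ∈ Finset.range n, (-1 : ℤ) ^ (i + 1) •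
        f (fun j => if j < i then α (a j) else if j = i then μ (a i) (a (i + 1)) else α (a (j + 1)))
    + (-1 : ℤ) ^ (n + 1) • r (f a) (α^[n - 1] (a n))

set_option linter.unusedSectionVars false

/-- The basic substitution operation underlying the Hochschild coboundary: apply `α`
everywhere except at position `i`, where the product of the entries `i` and `i + 1` is
inserted. -/
def hS (μ : A → A → A) (α : A → A) (i : ℕ) (a : ℕ → A) : ℕ → A := fun j =>
  if j < i then α (a j) else if j = i then μ (a i) (a (i + 1)) else α (a (j + 1))

/-- The `i`-th "coface" piece of the Hochschild coboundary on `n`-cochains. -/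
def hD (μ : A → A → A) (α : A → A) (l : A → M → M) (r : M → A → M)
    (n i : ℕ) (f : (ℕ → A) → M) (a : ℕ → A) : M :=
  if i = 0 then l (α^[n - 1] (a 0)) (f fun j => a (j + 1))
  else if i = n + 1 then r (f a) (α^[n - 1] (a n))
  else f (hS μ α (i - 1) a)

variable {μ : A → A → A} {α : A → A} {l : A → M → M} {r : M → A → M}

lemma hS_lt {i j : ℕ} (h : j < i) (a : ℕ → A) : hS μ α i a j = α (a j) := if_pos h

lemma hS_self (i : ℕ) (a : ℕ → A) : hS μ α i a i = μ (a i) (a (i + 1)) := by simp [hS]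

lemma hS_gt {i j : ℕ} (h : i < j) (a : ℕ → A) : hS μ α i a j = α (a (j + 1)) := by
  simp only [hS, if_neg (by omega : ¬ j < i), if_neg (by omega : ¬ j = i)]

lemma hD_zero (n : ℕ) (f : (ℕ → A) → M) (a : ℕ → A) :
    hD μ α l r n 0 f a = l (α^[n - 1] (a 0)) (f fun j => a (j + 1)) := by simp [hD]

lemma hD_top (n : ℕ) (f : (ℕ → A) → M) (a : ℕ → A) :
    hD μ α l r n (n + 1) f a = r (f a) (α^[n - 1] (a n)) := by simp [hD]

lemma hD_mid {n i : ℕ} (h1 : 1 ≤ i) (h2 : i ≤ n) (f : (ℕ → A) → M) (a : ℕ → A) :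
    hD μ α l r n i f a = f (hS μ α (i - 1) a) := by
  simp only [hD, if_neg (by omega : ¬ i = 0), if_neg (by omega : ¬ i = n + 1)]

/-- The Hochschild coboundary is the alternating sum of the coface pieces. -/
lemma hdelta_eq (n : ℕ) (f : (ℕ → A) → M) (a : ℕ → A) :
    hdelta μ α l r n f a = ∑ i ∈ Finset.range (n + 2), (-1 : ℤ) ^ i • hD μ α l r n i f a := by
  rw [Finset.sum_range_succ, Finset.sum_range_succ']
  have hmid : ∀ i ∈ Finset.range n, (-1 : ℤ) ^ (i + 1) • hD μ α l r n (i + 1) f a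
      = (-1 : ℤ) ^ (i + 1) • f (fun j => if j < i then α (a j)
          else if j = i then μ (a i) (a (i + 1)) else α (a (j + 1))) := by
    intro i hi
    rw [Finset.mem_range] at hi
    rw [hD_mid (by omega) (by omega)]
    have he : hS μ α (i + 1 - 1) a = fun j => if j < i then α (a j)
        else if j = i then μ (a i) (a (i + 1)) else α (a (j + 1)) := by
      funext j; simp only [Nat.add_sub_cancel, hS]
    rw [he]
  rw [Finset.sum_congr rfl hmid, hD_zero, hD_top]
  simp only [hdelta, pow_zero, one_smul]
  abel

/-- The cosimplicial-type commutation rule for the substitutions `hS`. -/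
lemma hS_comp (hassoc : ∀ a b c : A, μ (μ a b) (α c) = μ (α a) (μ b c))
    (hmult : ∀ a b : A, α (μ a b) = μ (α a) (α b))
    {p q : ℕ} (hpq : p ≤ q) (a : ℕ → A) :
    hS μ α p (hS μ α (q + 1) a) = hS μ α q (hS μ α p a) := by
  funext j
  rcases lt_trichotomy j p with hjp | rfl | hjp
  · simp only [hS_lt hjp, hS_lt (show j < q + 1 by omega), hS_lt (show j < q by omega)]
  · rcases eq_or_lt_of_le hpq with rfl | hpq'
    · simp only [hS_self, hS_lt (show j < j + 1 by omega), hS_gt (show j < j + 1 by omega)]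
      exact (hassoc _ _ _).symm
    · simp only [hS_self, hS_lt (show j < q + 1 by omega),
        hS_lt (show j + 1 < q + 1 by omega), hS_lt (show j < q by omega)]
      exact (hmult _ _).symm
  · rcases lt_trichotomy j q with hjq | rfl | hjq
    · simp only [hS_gt hjp, hS_lt (show j + 1 < q + 1 by omega), hS_lt hjq]
    · simp only [hS_gt hjp, hS_self, hS_gt (show p < j + 1 by omega)]
      exact hmult _ _
    · simp only [hS_gt hjp, hS_gt (show q + 1 < j + 1 by omega), hS_gt hjq,
        hS_gt (show p < j + 1 by omega)]

lemma hS_shift {i : ℕ} (hi : 1 ≤ i) (a : ℕ → A) :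
    (fun j => hS μ α i a (j + 1)) = hS μ α (i - 1) fun j => a (j + 1) := by
  funext j
  rcases lt_trichotomy j (i - 1) with h | h | h
  · rw [hS_lt h, hS_lt (show j + 1 < i by omega)]
  · rw [show j + 1 = i by omega, hS_self, h, hS_self]
    show μ (a i) (a (i + 1)) = μ (a (i - 1 + 1)) (a (i - 1 + 1 + 1))
    rw [show i - 1 + 1 = i by omega]
  · rw [hS_gt (show i < j + 1 by omega), hS_gt (show i - 1 < j by omega)]

/-- The cosimplicial identities for the coface pieces of the Hochschild coboundary. -/
lemma hD_comp (β : M → M)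
    (hassoc : ∀ a b c : A, μ (μ a b) (α c) = μ (α a) (μ b c))
    (hmult : ∀ a b : A, α (μ a b) = μ (α a) (α b))
    (hbm1 : ∀ (a b : A) (m : M), l (μ a b) (β m) = l (α a) (l b m))
    (hbm2 : ∀ (a : A) (m : M) (b : A), r (l a m) (α b) = l (α a) (r m b))
    (hbm3 : ∀ (m : M) (a b : A), r (r m a) (α b) = r (β m) (μ a b))
    (n : ℕ) (hn : 1 ≤ n) (f : (ℕ → A) → M)
    (hdep : ∀ a b : ℕ → A, (∀ j < n, a j = b j) → f a = f b)
    (hcomm : ∀ a : ℕ → A, β (f a) = f fun j => α (a j))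
    (i j : ℕ) (hj : j ≤ i) (hi : i ≤ n + 1) (a : ℕ → A) :
    hD μ α l r (n + 1) (i + 1) (hD μ α l r n j f) a
      = hD μ α l r (n + 1) j (hD μ α l r n i f) a := by
  have hα1 : ∀ x : A, α^[n] x = α (α^[n - 1] x) := fun x => by
    conv_lhs => rw [show n = (n - 1) + 1 by omega]
    rw [Function.iterate_succ_apply']
  have hα2 : ∀ x : A, α^[n] x = α^[n - 1] (α x) := fun x => by
    conv_lhs => rw [show n = (n - 1) + 1 by omega]
    rw [Function.iterate_succ_apply]
  have hμit : ∀ x y : A, α^[n - 1] (μ x y) = μ (α^[n - 1] x) (α^[n - 1] y) := by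
    have key : ∀ (m : ℕ) (x y : A), α^[m] (μ x y) = μ (α^[m] x) (α^[m] y) := by
      intro m
      induction m with
      | zero => intro x y; rfl
      | succ m ih =>
        intro x y
        rw [Function.iterate_succ_apply', ih, hmult]
        rw [Function.iterate_succ_apply' α m x, Function.iterate_succ_apply' α m y]
    exact key (n - 1)
  rcases Nat.eq_zero_or_pos j with rfl | hj1
  · rcases eq_or_lt_of_le hi with rfl | hi'
    · -- Case C : `j = 0`, `i = n + 1`
      rw [hD_top, hD_zero, hD_zero, hD_top, Nat.add_sub_cancel]
      show r (l (α^[n - 1] (a 0)) (f fun j => a (j + 1))) (α^[n] (a (n + 1)))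
        = l (α^[n] (a 0)) (r (f fun j => a (j + 1)) (α^[n - 1] (a (n + 1))))
      rw [hα1 (a (n + 1)), hbm2, ← hα1 (a 0)]
    · rcases Nat.eq_zero_or_pos i with rfl | hi1
      · -- Case A : `j = i = 0`
        rw [show (0 : ℕ) + 1 = 1 from rfl, hD_mid (le_refl 1) (by omega), hD_zero, hD_zero,
          hD_zero, Nat.add_sub_cancel]
        have e1 : (fun j' => hS μ α (1 - 1) a (j' + 1)) = fun j' => α (a (j' + 1 + 1)) :=
          funext fun j' => hS_gt (by omega) a
        have e0 : hS μ α (1 - 1) a 0 = μ (a 0) (a 1) := hS_self 0 a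
        rw [e1, e0, hμit]
        have hc : (f fun j' => α (a (j' + 1 + 1))) = β (f fun j' => a (j' + 1 + 1)) :=
          (hcomm _).symm
        rw [hc, hbm1, ← hα1 (a 0)]
      · -- Case B : `j = 0`, `1 ≤ i ≤ n`
        rw [hD_mid (by omega) (by omega : i + 1 ≤ n + 1), hD_zero, hD_zero, Nat.add_sub_cancel,
          hD_mid hi1 (by omega), show n + 1 - 1 = n by omega]
        rw [hS_lt (show 0 < i by omega), hS_shift hi1, hα2 (a 0)]
  · rcases eq_or_lt_of_le hi with rfl | hi'
    · rcases eq_or_lt_of_le hj with rfl | hj'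
      · -- Case E2 : `j = i = n + 1`
        rw [hD_top, hD_top, hD_mid (by omega) (le_refl (n + 1)), hD_top]
        rw [show n + 1 - 1 = n by omega]
        rw [hα1 (a (n + 1)), hbm3, hS_self, hμit]
        have hfa : f (hS μ α n a) = f fun j' => α (a j') :=
          hdep _ _ fun j' hj' => hS_lt hj' a
        rw [hfa, ← hcomm]
      · -- Case E1 : `1 ≤ j ≤ n`, `i = n + 1`
        have hjn : j ≤ n := by omega
        rw [hD_top, hD_mid hj1 hjn, hD_mid hj1 (by omega : j ≤ n + 1), hD_top,
          show n + 1 - 1 = n by omega]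
        rw [hS_gt (show j - 1 < n by omega), ← hα2]
    · -- Case D : `1 ≤ j ≤ i ≤ n`
      have hin : i ≤ n := by omega
      rw [hD_mid (by omega) (by omega : i + 1 ≤ n + 1), hD_mid hj1 (show j ≤ n by omega),
        hD_mid hj1 (by omega : j ≤ n + 1), hD_mid (by omega : 1 ≤ i) hin]
      rw [show i + 1 - 1 = (i - 1) + 1 by omega]
      exact congrArg f (hS_comp hassoc hmult (show j - 1 ≤ i - 1 by omega) a)

/-- The coface pieces are linear in the cochain (for linear actions). -/
lemma hD_sum (μ0 : A → A → A) (α0 : A → A) (l0 : A →ₗ[k] M →ₗ[k] M) (r0 : M →ₗ[k] A →ₗ[k] M)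
    (n i : ℕ) (s : Finset ℕ) (c : ℕ → ℤ) (g : ℕ → (ℕ → A) → M) (a : ℕ → A) :
    hD μ0 α0 (fun u m => l0 u m) (fun m u => r0 m u) n i (fun b => ∑ j ∈ s, c j • g j b) a
      = ∑ j ∈ s, c j • hD μ0 α0 (fun u m => l0 u m) (fun m u => r0 m u) n i (g j) a := by
  unfold hD
  split_ifs
  · simp only [map_sum, map_zsmul]
  · simp only [map_sum, map_zsmul, LinearMap.coe_sum, Finset.sum_apply, LinearMap.smul_apply]
  · rfl

/-- The alternating double sum of an "almost symmetric" family vanishes. -/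
lemma sum_cancel (m : ℕ) (F : ℕ → ℕ → M)
    (hF : ∀ i j, j ≤ i → i < m → F (i + 1) j = F j i) :
    ∑ i ∈ Finset.range (m + 1), ∑ j ∈ Finset.range m, (-1 : ℤ) ^ (i + j) • F i j = 0 := by
  classical
  rw [← Finset.sum_product']
  refine Finset.sum_involution
    (fun p _ => if p.1 ≤ p.2 then (p.2 + 1, p.1) else (p.2, p.1 - 1)) ?_ ?_ ?_ ?_
  · rintro ⟨i, j⟩ ha
    simp only [Finset.mem_product, Finset.mem_range] at ha
    by_cases h : i ≤ j
    · have hFe : F (j + 1) i = F i j := hF j i h ha.2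
      have hs : (-1 : ℤ) ^ (j + 1 + i) = -(-1 : ℤ) ^ (i + j) := by
        rw [show j + 1 + i = (i + j) + 1 by omega, pow_succ]; ring
      simp [h, hFe, hs]
    · have hFe : F i j = F j (i - 1) := by
        rw [show i = (i - 1) + 1 by omega]
        exact hF (i - 1) j (by omega) (by omega)
      have hs : (-1 : ℤ) ^ (j + (i - 1)) = -(-1 : ℤ) ^ (i + j) := by
        rw [show i + j = (j + (i - 1)) + 1 by omega, pow_succ]; ring
      simp [h, hFe, hs]
  · rintro ⟨i, j⟩ ha hne
    by_cases h : i ≤ j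
    · simp only [if_pos h, ne_eq, Prod.mk.injEq, not_and]
      omega
    · simp only [if_neg h, ne_eq, Prod.mk.injEq, not_and]
      omega
  · rintro ⟨i, j⟩ ha
    simp only [Finset.mem_product, Finset.mem_range] at ha
    by_cases h : i ≤ j
    · simp only [if_pos h, Finset.mem_product, Finset.mem_range]
      exact ⟨by omega, by omega⟩
    · simp only [if_neg h, Finset.mem_product, Finset.mem_range]
      exact ⟨by omega, by omega⟩
  · rintro ⟨i, j⟩ ha
    by_cases h : i ≤ j
    · simp [h, show ¬ j + 1 ≤ i by omega]
    · have h2 : j ≤ i - 1 := by omega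
      simp [h, h2, show i - 1 + 1 = i by omega]

/-- the Hochschild coboundary of a multiplicative hom-associative algebra
with coefficients in a bimodule `(M, β)` satisfies `δ_α² = 0`. -/
theorem hochschild_coboundary_squared_zero
    (μ : A →ₗ[k] A →ₗ[k] A) (α : A →ₗ[k] A)
    (hassoc : ∀ a b c : A, μ (μ a b) (α c) = μ (α a) (μ b c))
    (hmult : ∀ a b : A, α (μ a b) = μ (α a) (α b))
    (l : A →ₗ[k] M →ₗ[k] M) (r : M →ₗ[k] A →ₗ[k] M) (β : M →ₗ[k] M)
    (hβl : ∀ (a : A) (m : M), β (l a m) = l (α a) (β m))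
    (hβr : ∀ (m : M) (a : A), β (r m a) = r (β m) (α a))
    (hbm1 : ∀ (a b : A) (m : M), l (μ a b) (β m) = l (α a) (l b m))
    (hbm2 : ∀ (a : A) (m : M) (b : A), r (l a m) (α b) = l (α a) (r m b))
    (hbm3 : ∀ (m : M) (a b : A), r (r m a) (α b) = r (β m) (μ a b))
    (n : ℕ) (hn : 1 ≤ n) (f : (ℕ → A) → M)
    (hdep : ∀ a b : ℕ → A, (∀ j < n, a j = b j) → f a = f b)
    (hcomm : ∀ a : ℕ → A, β (f a) = f fun j => α (a j))
    (hadd : ∀ (a : ℕ → A) (j : ℕ) (x y : A), j < n →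
      f (Function.update a j (x + y)) = f (Function.update a j x) + f (Function.update a j y))
    (hsmul : ∀ (a : ℕ → A) (j : ℕ) (c : k) (x : A), j < n →
      f (Function.update a j (c • x)) = c • f (Function.update a j x)) :
    ∀ a : ℕ → A,
      hdelta (fun u v => μ u v) (⇑α) (fun u m => l u m) (fun m u => r m u) (n + 1)
        (hdelta (fun u v => μ u v) (⇑α) (fun u m => l u m) (fun m u => r m u) n f) a = 0 := by
  intro a
  rw [hdelta_eq]
  have hin : hdelta (fun u v => μ u v) (⇑α) (fun u m => l u m) (fun m u => r m u) n f
      = fun b => ∑ j ∈ Finset.range (n + 2),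
          (-1 : ℤ) ^ j • hD (fun u v => μ u v) (⇑α) (fun u m => l u m) (fun m u => r m u) n j f b :=
    funext fun b => hdelta_eq n f b
  rw [hin]
  have step : ∀ i ∈ Finset.range (n + 1 + 2),
      (-1 : ℤ) ^ i • hD (fun u v => μ u v) (⇑α) (fun u m => l u m) (fun m u => r m u) (n + 1) i
        (fun b => ∑ j ∈ Finset.range (n + 2),
          (-1 : ℤ) ^ j • hD (fun u v => μ u v) (⇑α) (fun u m => l u m) (fun m u => r m u) n j f b) a
      = ∑ j ∈ Finset.range (n + 2), (-1 : ℤ) ^ (i + j) •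
          hD (fun u v => μ u v) (⇑α) (fun u m => l u m) (fun m u => r m u) (n + 1) i
            (hD (fun u v => μ u v) (⇑α) (fun u m => l u m) (fun m u => r m u) n j f) a := by
    intro i _
    rw [hD_sum, Finset.smul_sum]
    refine Finset.sum_congr rfl fun j _ => ?_
    rw [smul_smul, ← pow_add]
  rw [Finset.sum_congr rfl step]
  refine sum_cancel (n + 2)
    (fun i j => hD (fun u v => μ u v) (⇑α) (fun u m => l u m) (fun m u => r m u) (n + 1) i
      (hD (fun u v => μ u v) (⇑α) (fun u m => l u m) (fun m u => r m u) n j f) a) ?_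
  intro i j hji him
  exact hD_comp (⇑β) hassoc hmult hbm1 hbm2 hbm3 n hn f hdep hcomm i j hji (by omega) a

end
end

section
/- Let (A, μ, α) be a multiplicative hom-associative algebra, with the cap product i_f(a_0 ⊗ a_1 ⋯ a_n) = α^{p-1}(a_0)·f(a_1,…,a_p) ⊗ α^p(a_{p+1}) ⋯ α^p(a_n) for f ∈ O(p). Then i_{f∪g} = i_f ∘ i_g on chains, where f ∪ g = (μ ∘_2 f) ∘_1 g, i.e., (f∪g)(a_1,…,a_{p+q}) is given by evaluating (μ ∘_2 f) ∘_1 g via the operad compositions. -/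
open Function

section
variable {k : Type*} [CommRing k] {A : Type*} [AddCommGroup A] [Module k A]

/-- on Hochschild chains of a multiplicative hom-associative algebra
the cap product `i_f x = (μ ∘_2 f) •_0 x` satisfies `i_{f∪g} = i_f ∘ i_g`, where
`f ∪ g = (μ ∘_2 f) ∘_1 g`. -/
theorem cap_cup_eq_cap_comp_cap (μ : A →ₗ[k] A →ₗ[k] A) (α : A →ₗ[k] A)
    (hassoc : ∀ a b c : A, μ (μ a b) (α c) = μ (α a) (μ b c))
    (hmult : ∀ a b : A, α (μ a b) = μ (α a) (α b))
    (p q : ℕ) (f g : (ℕ → A) → A)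
    (hf : InO k (⇑α) p f) (hg : InO k (⇑α) q g)
    (hp : 1 ≤ p) (hq : 1 ≤ q) (x : ℕ → A) :
    mBul (⇑α) (p + q + 1) 0
        (oComp (⇑α) (p + q) 2 (fun a : ℕ → A => μ (a 0) (a 1))
          (oComp (⇑α) q 1 (oComp (⇑α) p 2 (fun a : ℕ → A => μ (a 0) (a 1)) f) g)) x
      = mBul (⇑α) (p + 1) 0 (oComp (⇑α) p 2 (fun a : ℕ → A => μ (a 0) (a 1)) f)
          (mBul (⇑α) (q + 1) 0 (oComp (⇑α) q 2 (fun a : ℕ → A => μ (a 0) (a 1)) g) x) := by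
  obtain ⟨p, rfl⟩ : ∃ p', p = p' + 1 := ⟨p - 1, by omega⟩
  obtain ⟨q, rfl⟩ : ∃ q', q = q' + 1 := ⟨q - 1, by omega⟩
  have hmn : ∀ (n : ℕ) (a b : A), (⇑α)^[n] (μ a b) = μ ((⇑α)^[n] a) ((⇑α)^[n] b) := by
    intro n
    induction n with
    | zero => intro a b; simp
    | succ n ih =>
      intro a b
      rw [Function.iterate_succ_apply', ih, hmult, Function.iterate_succ_apply',
        Function.iterate_succ_apply']
  have hiter : ∀ (m n u v : ℕ), m = n → u = v → (⇑α)^[m] (x u) = (⇑α)^[n] (x v) := by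
    rintro m n u v rfl rfl; rfl
  funext j
  simp only [mBul, oComp]
  rcases j with _ | j
  · norm_num
    have hV : (fun l => (⇑α)^[q] (α (x (1 + l + (q + 1)))))
        = fun l => α ((⇑α)^[q] (x (1 + (1 + l + q)))) := by
      funext l
      have h : 1 + l + (q + 1) = 1 + (1 + l + q) := by omega
      rw [h, ← Function.iterate_succ_apply, Function.iterate_succ_apply']
    rw [hV, ← hf.equivar, hmn p, ← Function.iterate_add_apply, hassoc]
    congr 1
    rw [← Function.iterate_succ_apply' (⇑α) (p + q) (x 0)]
    congr 1
    exact hiter (p + 1 + q) (p + q + 1) 0 0 (by omega) rfl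
  · norm_num
    simp only [← Function.iterate_succ_apply, ← Function.iterate_add_apply]
    exact hiter _ _ _ _ (by omega) (by omega)

end
end
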